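/- arXiv:2503.00541 — 4 statements merged into one kernel-verified Lean document; each statement's English description precedes it below -/
import Mathlib

section
/- Let f : ℝⁿ → ℝ be smooth with f(0) = 0, homogeneous of degree k under positive scalings (f(t • x) = tᵏ f(x) for all t > 0), where k is a natural number. Then f is a homogeneous polynomial of degree k. -/
open Filter Topology Set

private lemma aux_pow_deriv' (k : ℕ) (c : ℝ) :
    ∀ t : ℝ, iteratedDeriv k (fun s : ℝ => s ^ k * c) t = (k.factorial : ℝ) * c := by
  induction k generalizing c with
  | zero => intro t; simp
  | succ k ih =>
    intro t
    rw [iteratedDeriv_succ']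
    have : deriv (fun s : ℝ => s ^ (k+1) * c) = fun s : ℝ => s ^ k * ((k+1) * c) := by
      funext s
      rw [deriv_mul_const (by fun_prop)]
      simp [deriv_pow]; ring
    rw [this, ih]
    push_cast [Nat.factorial_succ]
    ring

private lemma aux_key' {n : ℕ} (f : (Fin n → ℝ) → ℝ) (hf : ContDiff ℝ (⊤ : ℕ∞) f)
    (k : ℕ)
    (hhom : ∀ t : ℝ, 0 < t → ∀ x : Fin n → ℝ, f (t • x) = t ^ k * f x) :
    ∀ x, iteratedFDeriv ℝ k f 0 (fun _ => x) = (k.factorial : ℝ) * f x := by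
  intro x
  set L : ℝ →L[ℝ] (Fin n → ℝ) := (ContinuousLinearMap.id ℝ ℝ).smulRight x with hL
  have hg : ContDiff ℝ (⊤ : ℕ∞) (f ∘ L) := hf.comp L.contDiff
  have h1 : iteratedDeriv k (f ∘ L) 0 = iteratedFDeriv ℝ k f 0 (fun _ => x) := by
    rw [iteratedDeriv_eq_iteratedFDeriv, L.iteratedFDeriv_comp_right hf 0 (by exact_mod_cast le_top)]
    simp [hL]
  have h2 : ∀ t : ℝ, 0 < t → iteratedDeriv k (f ∘ L) t = (k.factorial : ℝ) * f x := by
    intro t ht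
    have heq : (f ∘ L) =ᶠ[𝓝 t] (fun s => s ^ k * f x) := by
      filter_upwards [Ioi_mem_nhds ht] with s hs
      simp only [Function.comp_apply, hL, ContinuousLinearMap.smulRight_apply,
        ContinuousLinearMap.id_apply]
      exact hhom s hs x
    rw [heq.iteratedDeriv_eq, aux_pow_deriv']
  have hc : Filter.Tendsto (iteratedDeriv k (f ∘ L)) (𝓝[>] (0:ℝ))
      (𝓝 (iteratedDeriv k (f ∘ L) 0)) :=
    ((hg.continuous_iteratedDeriv k (by exact_mod_cast le_top)).continuousAt.tendsto).mono_left nhdsWithin_le_nhds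
  have hc' : Filter.Tendsto (iteratedDeriv k (f ∘ L)) (𝓝[>] (0:ℝ))
      (𝓝 ((k.factorial : ℝ) * f x)) := by
    apply Filter.Tendsto.congr' _ tendsto_const_nhds
    filter_upwards [self_mem_nhdsWithin] with s hs
    exact (h2 s hs).symm
  rw [← h1, tendsto_nhds_unique hc hc']

private lemma aux_poly' {n k : ℕ} (m : ContinuousMultilinearMap ℝ (fun _ : Fin k => (Fin n → ℝ)) ℝ) :
    ∃ p : MvPolynomial (Fin n) ℝ, p.IsHomogeneous k ∧
      ∀ x : Fin n → ℝ, MvPolynomial.eval x p = m (fun _ => x) := by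
  refine ⟨∑ d : Fin k → Fin n, MvPolynomial.C (m fun i => Pi.single (d i) 1) *
      ∏ i, MvPolynomial.X (d i), ?_, ?_⟩
  · apply MvPolynomial.IsHomogeneous.sum
    intro d _
    have h1 : (MvPolynomial.C (m fun i => Pi.single (d i) 1) :
        MvPolynomial (Fin n) ℝ).IsHomogeneous 0 := MvPolynomial.isHomogeneous_C _ _
    have h2 : ((∏ i, MvPolynomial.X (d i)) : MvPolynomial (Fin n) ℝ).IsHomogeneous k := by
      have := MvPolynomial.IsHomogeneous.prod (Finset.univ : Finset (Fin k))
        (fun i => (MvPolynomial.X (d i) : MvPolynomial (Fin n) ℝ)) (fun _ => 1)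
        (fun i _ => MvPolynomial.isHomogeneous_X _ _)
      simpa using this
    simpa using h1.mul h2
  · intro x
    have hx : (fun _ : Fin k => x) = fun _ : Fin k => ∑ j, x j • (Pi.single j 1 : Fin n → ℝ) := by
      funext i
      have := pi_eq_sum_univ x
      convert this using 2 with j
      funext j'
      simp [Pi.single_apply, Pi.smul_apply, eq_comm]
    have hms : m (fun _ => x) =
        ∑ d : Fin k → Fin n, m (fun i => x (d i) • (Pi.single (d i) 1 : Fin n → ℝ)) := by
      rw [hx]
      exact m.toMultilinearMap.map_sum (fun i j => x j • (Pi.single j 1 : Fin n → ℝ))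
    rw [hms]
    simp only [MvPolynomial.eval_sum, MvPolynomial.eval_mul, MvPolynomial.eval_C,
      MvPolynomial.eval_prod, MvPolynomial.eval_X]
    congr 1
    funext d
    have := m.toMultilinearMap.map_smul_univ (fun i => x (d i))
      (fun i => (Pi.single (d i) 1 : Fin n → ℝ))
    rw [show (m fun i => x (d i) • (Pi.single (d i) 1 : Fin n → ℝ)) =
      m.toMultilinearMap fun i => x (d i) • (Pi.single (d i) 1 : Fin n → ℝ) from rfl, this]
    simp [mul_comm]

/-- A smooth function on ℝⁿ vanishing at the origin and positively homogeneous of integer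
degree `k` is a homogeneous polynomial of degree `k`. -/
theorem stmt1 {n : ℕ} (f : (Fin n → ℝ) → ℝ) (hf : ContDiff ℝ (⊤ : ℕ∞) f) (hf0 : f 0 = 0)
    (k : ℕ)
    (hhom : ∀ t : ℝ, 0 < t → ∀ x : Fin n → ℝ, f (t • x) = t ^ k * f x) :
    ∃ p : MvPolynomial (Fin n) ℝ, p.IsHomogeneous k ∧
      ∀ x : Fin n → ℝ, MvPolynomial.eval x p = f x := by
  obtain ⟨p, hp, hpe⟩ := aux_poly' (iteratedFDeriv ℝ k f 0)
  refine ⟨MvPolynomial.C ((k.factorial : ℝ)⁻¹) * p, ?_, ?_⟩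
  · simpa using (MvPolynomial.isHomogeneous_C _ ((k.factorial : ℝ)⁻¹)).mul hp
  · intro x
    rw [MvPolynomial.eval_mul, MvPolynomial.eval_C, hpe, aux_key' f hf k hhom]
    field_simp
end

section
/- Let g(y) = (1/2) ∑_{i,j} A_{ij}(y) yᵢ yⱼ as above with A(0) invertible, let B be as above (so B is invertible near 0), and define the vector field X(y) = ∑_{i,j} (A(y)B(y)⁻¹)_{ij} yᵢ ∂/∂yⱼ on a neighbourhood of 0 where B is invertible. Then X(g)(y) = 2 g(y) on that neighbourhood, i.e. the directional derivative of g along X equals 2g. -/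
/-- Key identity in the Euler-like vector field proof of the Morse lemma: with
`g = (1/2) yᵀA(y)y`, `B` the matrix with `∇g = B·y`, and `X(y) = (A(y)B(y)⁻¹)ᵀ?`-contracted
Euler-like field `X(y)ⱼ = ∑ᵢ (A(y)B(y)⁻¹)ᵢⱼ yᵢ`, one has `X(g) = 2g` wherever `B` is
invertible. -/
theorem stmt4 {n : ℕ} (A B : (Fin n → ℝ) → Matrix (Fin n) (Fin n) ℝ)
    (hA : ∀ i j, ContDiff ℝ (⊤ : ℕ∞) (fun y => A y i j))
    (hsymm : ∀ y, (A y).IsSymm)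
    (g : (Fin n → ℝ) → ℝ)
    (hg : ∀ y, g y = (1 / 2) * ∑ i, ∑ j, A y i j * y i * y j)
    (hB : ∀ y k i, B y k i
      = A y i k + (1 / 2) * ∑ j, fderiv ℝ (fun z => A z i j) y (Pi.single k 1) * y j)
    (hA0 : IsUnit (A 0))
    (U : Set (Fin n → ℝ)) (hU : IsOpen U) (hU0 : (0 : Fin n → ℝ) ∈ U)
    (hBU : ∀ y ∈ U, IsUnit (B y)) :
    ∀ y ∈ U, fderiv ℝ g y (fun j => ∑ i, (A y * (B y)⁻¹) i j * y i) = 2 * g y := by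
  intro y hy
  set D : Fin n → Fin n → (Fin n → ℝ) →L[ℝ] ℝ :=
    fun i j => fderiv ℝ (fun z => A z i j) y with hD
  set P : Fin n → (Fin n → ℝ) →L[ℝ] ℝ :=
    fun i => ContinuousLinearMap.proj i with hP
  have hder : HasFDerivAt g
      ((1/2 : ℝ) • ∑ i, ∑ j,
        ((A y i j * y i) • P j + y j • ((A y i j) • P i + y i • D i j))) y := by
    have h1 : HasFDerivAt (fun z => ∑ i, ∑ j, A z i j * z i * z j)
        (∑ i, ∑ j,
          ((A y i j * y i) • P j + y j • ((A y i j) • P i + y i • D i j))) y := by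
      apply HasFDerivAt.fun_sum
      intro i _
      apply HasFDerivAt.fun_sum
      intro j _
      exact (((hA i j).differentiable (by simp) y).hasFDerivAt.mul
        (P i).hasFDerivAt).mul (P j).hasFDerivAt
    have h2 := h1.const_mul (1/2 : ℝ)
    have hgf : g = fun z => (1/2 : ℝ) * ∑ i, ∑ j, A z i j * z i * z j := funext hg
    rw [hgf]
    exact h2
  have hfd := hder.fderiv
  have hgrad : ∀ v : Fin n → ℝ, fderiv ℝ g y v
      = (1/2 : ℝ) * ∑ i, ∑ j,
        (A y i j * y i * v j + y j * (A y i j * v i + y i * D i j v)) := by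
    intro v
    rw [hfd]
    simp only [ContinuousLinearMap.smul_apply, ContinuousLinearMap.sum_apply,
      ContinuousLinearMap.add_apply, ContinuousLinearMap.smul_apply, smul_eq_mul, hP,
      ContinuousLinearMap.proj_apply]
  -- gradient formula: ∂g/∂y_k = ∑ i, B y k i * y i
  have hgradk : ∀ k, fderiv ℝ g y (Pi.single k 1) = ∑ i, B y k i * y i := by
    intro k
    rw [hgrad]
    have key : ∀ i j, A y i j * y i * (Pi.single k 1 : Fin n → ℝ) j
        + y j * (A y i j * (Pi.single k 1 : Fin n → ℝ) i + y i * D i j (Pi.single k 1))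
        = (if j = k then A y i j * y i else 0)
          + ((if i = k then y j * A y i j else 0) + y j * (y i * D i j (Pi.single k 1))) := by
      intro i j
      by_cases h1 : j = k <;> by_cases h2 : i = k <;>
        simp [h1, h2, Pi.single_apply] <;> ring
    simp only [key, Finset.sum_add_distrib]
    have hT1 : (∑ i, ∑ j, if j = k then A y i j * y i else 0)
        = ∑ i, A y i k * y i := by
      simp [Finset.sum_ite_eq']
    have hT2 : (∑ i : Fin n, ∑ j, if i = k then y j * A y i j else 0)
        = ∑ i, A y i k * y i := by
      rw [Finset.sum_comm]
      simp only [Finset.sum_ite_eq', Finset.mem_univ, if_true]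
      exact Finset.sum_congr rfl fun j _ => by rw [← (hsymm y).apply]; ring
    rw [hT1, hT2]
    have hRHS : (∑ i, B y k i * y i)
        = (∑ i, A y i k * y i)
          + ∑ i, ∑ j, (1/2 : ℝ) * (D i j (Pi.single k 1) * y j) * y i := by
      simp only [hB y k, add_mul, Finset.sum_add_distrib, hD]
      congr 1
      exact Finset.sum_congr rfl fun i _ => by rw [Finset.mul_sum, Finset.sum_mul]
    rw [hRHS]
    have h4 : ∑ i, ∑ j, (1/2:ℝ) * ((D i j) (Pi.single k 1) * y j) * y i
        = 1/2 * ∑ i, ∑ j, y j * (y i * (D i j) (Pi.single k 1)) := by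
      rw [Finset.mul_sum]
      refine Finset.sum_congr rfl fun i _ => ?_
      rw [Finset.mul_sum]
      exact Finset.sum_congr rfl fun j _ => by ring
    rw [h4]
    ring
  -- linearity: value at v from values at basis vectors
  have hlin : ∀ v : Fin n → ℝ,
      fderiv ℝ g y v = ∑ k, v k * fderiv ℝ g y (Pi.single k 1) := by
    intro v
    have hv : v = ∑ k, v k • (Pi.single k 1 : Fin n → ℝ) := by
      conv_lhs => rw [pi_eq_sum_univ v]
      refine Finset.sum_congr rfl fun k _ => ?_
      congr 1
      funext j
      simp [Pi.single_apply, eq_comm]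
    conv_lhs => rw [hv]
    rw [map_sum]
    exact Finset.sum_congr rfl fun k _ => by rw [map_smul]; simp
  set v : Fin n → ℝ := fun j => ∑ i, (A y * (B y)⁻¹) i j * y i with hv
  rw [hlin v]
  simp only [hgradk]
  -- matrix algebra
  have hdet : IsUnit (B y).det := (Matrix.isUnit_iff_isUnit_det _).mp (hBU y hy)
  have hAB : A y * (B y)⁻¹ * B y = A y :=
    Matrix.nonsing_inv_mul_cancel_right (B y) (A y) hdet
  calc ∑ k, v k * ∑ i, B y k i * y i
      = ∑ k, ∑ m, ∑ i, (A y * (B y)⁻¹) m k * y m * (B y k i * y i) := by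
        refine Finset.sum_congr rfl fun k _ => ?_
        rw [hv]
        rw [Finset.sum_mul]
        refine Finset.sum_congr rfl fun m _ => ?_
        rw [Finset.mul_sum]
    _ = ∑ m, ∑ i, ∑ k, (A y * (B y)⁻¹) m k * y m * (B y k i * y i) := by
        rw [Finset.sum_comm]
        refine Finset.sum_congr rfl fun m _ => Finset.sum_comm
    _ = ∑ m, ∑ i, A y m i * y m * y i := by
        refine Finset.sum_congr rfl fun m _ => Finset.sum_congr rfl fun i _ => ?_
        have : ∑ k, (A y * (B y)⁻¹) m k * y m * (B y k i * y i)
            = (∑ k, (A y * (B y)⁻¹) m k * B y k i) * (y m * y i) := by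
          rw [Finset.sum_mul]
          exact Finset.sum_congr rfl fun k _ => by ring
        rw [this, ← Matrix.mul_apply, hAB]
        ring
    _ = 2 * g y := by
        rw [hg y, ← mul_assoc]
        norm_num
end

section
/- Let f : ℝ × ℝⁿ⁻¹ → ℝ be smooth, f(y₁, y') with f(0, y') = 0 and ∂f/∂y₁(0, y') ≠ 0 for all y'. Then there exists a local diffeomorphism φ near {0} × ℝⁿ⁻¹ of the form φ(y₁, y') = (h(y₁, y'), y') with φ fixing {y₁ = 0} pointwise, such that (f ∘ φ)(y₁, y') = y₁. -/
open Set Function Metric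

noncomputable section Stmt14Aux

variable {m : ℕ}

private lemma stmt14_key_lin (D : ℝ × (Fin m → ℝ) →L[ℝ] ℝ) (s : ℝ) (v : Fin m → ℝ) :
    D (s, v) = s * D (1, 0) + D (0, v) := by
  have h : (s, v) = s • ((1:ℝ), (0 : Fin m → ℝ)) + ((0:ℝ), v) := by
    simp [Prod.ext_iff]
  rw [h, map_add, map_smul, smul_eq_mul]

private def stmt14_B (D : ℝ × (Fin m → ℝ) →L[ℝ] ℝ) : ℝ × (Fin m → ℝ) →L[ℝ] ℝ × (Fin m → ℝ) :=
  ((D (1,0))⁻¹ • (ContinuousLinearMap.fst ℝ ℝ (Fin m → ℝ) -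
      D.comp ((ContinuousLinearMap.inr ℝ ℝ (Fin m → ℝ)).comp
        (ContinuousLinearMap.snd ℝ ℝ (Fin m → ℝ))))).prod
    (ContinuousLinearMap.snd ℝ ℝ (Fin m → ℝ))

private lemma stmt14_B_apply (D : ℝ × (Fin m → ℝ) →L[ℝ] ℝ) (y : ℝ × (Fin m → ℝ)) :
    stmt14_B D y = ((D (1,0))⁻¹ * (y.1 - D (0, y.2)), y.2) := by
  simp [stmt14_B, smul_eq_mul]

/-- The invertible derivative of `p ↦ (f p, p.2)` when `∂₁ f ≠ 0`. -/
private def stmt14_dEquiv (D : ℝ × (Fin m → ℝ) →L[ℝ] ℝ) (ha : D (1, 0) ≠ 0) :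
    (ℝ × (Fin m → ℝ)) ≃L[ℝ] (ℝ × (Fin m → ℝ)) :=
  ContinuousLinearEquiv.equivOfInverse
    (D.prod (ContinuousLinearMap.snd ℝ ℝ (Fin m → ℝ))) (stmt14_B D)
    (fun x => by
      rw [ContinuousLinearMap.prod_apply, stmt14_B_apply]
      have : D x = x.1 * D (1, 0) + D (0, x.2) := by
        rw [← stmt14_key_lin D x.1 x.2]
      simp only [ContinuousLinearMap.coe_snd', this]
      ext
      · simp only
        field_simp
        ring
      · rfl)
    (fun y => by
      rw [stmt14_B_apply, ContinuousLinearMap.prod_apply]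
      rw [stmt14_key_lin D]
      simp only [ContinuousLinearMap.coe_snd']
      ext
      · simp only
        field_simp
        ring
      · rfl)

private lemma stmt14_dEquiv_coe (D : ℝ × (Fin m → ℝ) →L[ℝ] ℝ) (ha : D (1, 0) ≠ 0) :
    (stmt14_dEquiv D ha : ℝ × (Fin m → ℝ) →L[ℝ] ℝ × (Fin m → ℝ)) =
      D.prod (ContinuousLinearMap.snd ℝ ℝ (Fin m → ℝ)) := by
  ext x <;> rfl

end Stmt14Aux

section Main

variable {m : ℕ}

private lemma stmt14_mvt {f : ℝ × (Fin m → ℝ) → ℝ} (hf : ContDiff ℝ (⊤ : ℕ∞) f)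
    {y' : Fin m → ℝ} {s₁ s₂ : ℝ} (h12 : s₁ < s₂)
    (hA : ∀ t ∈ Ioo s₁ s₂, fderiv ℝ f (t, y') (1, 0) ≠ 0)
    (heq : f (s₁, y') = f (s₂, y')) : False := by
  set F : ℝ → ℝ := fun t => f (t, y') with hF
  have hder : ∀ x : ℝ, HasDerivAt F (fderiv ℝ f (x, y') (1, 0)) x := by
    intro x
    have h1 : HasDerivAt (fun t : ℝ => ((t, y') : ℝ × (Fin m → ℝ))) ((1:ℝ), (0 : Fin m → ℝ)) x :=
      (hasDerivAt_id x).prodMk (hasDerivAt_const x y')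
    have h2 : HasFDerivAt f (fderiv ℝ f (x, y')) (x, y') :=
      (hf.differentiable (by simp) (x, y')).hasFDerivAt
    exact h2.comp_hasDerivAt x h1
  obtain ⟨c, hc, hceq⟩ := exists_hasDerivAt_eq_slope F (fun x => fderiv ℝ f (x, y') (1, 0)) h12
    ((hf.continuous.comp (continuous_id.prodMk continuous_const)).continuousOn)
    (fun x _ => hder x)
  have : F s₂ - F s₁ = 0 := by simp only [hF]; rw [heq]; ring
  rw [this, zero_div] at hceq
  exact hA c hc hceq

end Main


/-- Normal form of a defining function along a hypersurface: if `f(0, y') = 0` and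
`∂f/∂y₁ (0, y') ≠ 0` for all `y'`, there is a local diffeomorphism `φ(y₁,y') = (h(y₁,y'), y')`
of a neighbourhood `U` of `{0} × ℝⁿ⁻¹` onto its (open) image, fixing `{y₁ = 0}` pointwise
and with smooth inverse, such that `f ∘ φ (y₁, y') = y₁` on `U`. -/
theorem stmt14 {m : ℕ} (f : ℝ × (Fin m → ℝ) → ℝ) (hf : ContDiff ℝ (⊤ : ℕ∞) f)
    (hf0 : ∀ y' : Fin m → ℝ, f (0, y') = 0)
    (hf1 : ∀ y' : Fin m → ℝ, fderiv ℝ f (0, y') (1, 0) ≠ 0) :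
    ∃ U : Set (ℝ × (Fin m → ℝ)), IsOpen U ∧ (∀ y' : Fin m → ℝ, ((0 : ℝ), y') ∈ U) ∧
      ∃ h : ℝ × (Fin m → ℝ) → ℝ,
        ContDiffOn ℝ (⊤ : ℕ∞) (fun p => ((h p, p.2) : ℝ × (Fin m → ℝ))) U ∧
        (∀ y' : Fin m → ℝ, h (0, y') = 0) ∧
        (∀ p ∈ U, f (h p, p.2) = p.1) ∧
        IsOpen ((fun p => ((h p, p.2) : ℝ × (Fin m → ℝ))) '' U) ∧
        ∃ ψ : ℝ × (Fin m → ℝ) → ℝ × (Fin m → ℝ),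
          ContDiffOn ℝ (⊤ : ℕ∞) ψ ((fun p => ((h p, p.2) : ℝ × (Fin m → ℝ))) '' U) ∧
          ∀ p ∈ U, ψ (h p, p.2) = p := by
  classical
  set A : Set (ℝ × (Fin m → ℝ)) := {p | fderiv ℝ f p (1, 0) ≠ 0} with hAdef
  have hcont : Continuous fun p : ℝ × (Fin m → ℝ) => fderiv ℝ f p (1, 0) :=
    (hf.continuous_fderiv (by simp)).clm_apply continuous_const
  have hAopen : IsOpen A := isOpen_ne.preimage hcont
  set W : Set (ℝ × (Fin m → ℝ)) := {p | ∀ t ∈ Icc (0:ℝ) 1, (t * p.1, p.2) ∈ A} with hWdef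
  have hWopen : IsOpen W := by
    rw [Metric.isOpen_iff]
    intro p hp
    have hK : IsCompact ((fun t : ℝ => ((t * p.1, p.2) : ℝ × (Fin m → ℝ))) '' Icc 0 1) :=
      isCompact_Icc.image (by continuity)
    have hKA : (fun t : ℝ => ((t * p.1, p.2) : ℝ × (Fin m → ℝ))) '' Icc 0 1 ⊆ A := by
      rintro _ ⟨t, ht, rfl⟩; exact hp t ht
    obtain ⟨δ, hδ, hth⟩ := hK.exists_thickening_subset_open hAopen hKA
    refine ⟨δ, hδ, ?_⟩
    intro q hq t ht
    apply hth
    rw [Metric.mem_thickening_iff]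
    refine ⟨(t * p.1, p.2), ⟨t, ht, rfl⟩, ?_⟩
    rw [Metric.mem_ball, Prod.dist_eq] at hq
    rw [Prod.dist_eq]
    apply max_lt
    · calc dist (t * q.1) (t * p.1) = |t| * dist q.1 p.1 := by
            rw [Real.dist_eq, Real.dist_eq, ← mul_sub, abs_mul]
        _ ≤ 1 * dist q.1 p.1 := by
            apply mul_le_mul_of_nonneg_right _ dist_nonneg
            rw [abs_le]; constructor <;> linarith [ht.1, ht.2]
        _ = dist q.1 p.1 := one_mul _
        _ < δ := lt_of_le_of_lt (le_max_left _ _) hq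
    · exact lt_of_le_of_lt (le_max_right _ _) hq
  have hWA : ∀ q ∈ W, fderiv ℝ f q (1, 0) ≠ 0 := by
    intro p hp
    have := hp 1 ⟨zero_le_one, le_refl 1⟩
    rw [one_mul] at this
    exact this
  have hW0 : ∀ y' : Fin m → ℝ, ((0:ℝ), y') ∈ W := by
    intro y' t _
    show fderiv ℝ f (t * 0, y') (1, 0) ≠ 0
    rw [mul_zero]
    exact hf1 y'
  have hWseg : ∀ q ∈ W, ∀ t ∈ uIcc (0:ℝ) q.1, ((t, q.2) : ℝ × (Fin m → ℝ)) ∈ A := by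
    rintro ⟨s, y'⟩ hq t ht
    rcases eq_or_ne s 0 with hs | hs
    · subst hs
      rw [Set.uIcc_self, Set.mem_singleton_iff] at ht
      subst ht
      have := hq 0 ⟨le_rfl, zero_le_one⟩
      rwa [zero_mul] at this
    · have h1 : t / s ∈ Icc (0:ℝ) 1 := by
        rcases lt_or_gt_of_ne hs with hneg | hpos
        · rw [Set.uIcc_of_ge hneg.le] at ht
          constructor
          · have h3 := div_nonneg (neg_nonneg.2 ht.2) (neg_nonneg.2 hneg.le)
            rwa [neg_div_neg_eq] at h3
          · have h2 : (t - s) / s ≤ 0 :=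
              div_nonpos_of_nonneg_of_nonpos (sub_nonneg.2 ht.1) hneg.le
            rw [sub_div, div_self hs] at h2
            linarith
        · rw [Set.uIcc_of_le hpos.le] at ht
          exact ⟨div_nonneg ht.1 hpos.le, (div_le_one hpos).2 ht.2⟩
      have := hq (t / s) h1
      rwa [div_mul_cancel₀ t hs] at this
  set g : ℝ × (Fin m → ℝ) → ℝ × (Fin m → ℝ) := fun p => (f p, p.2) with hgdef
  have hginj : Set.InjOn g W := by
    rintro ⟨s₁, y₁⟩ h1 ⟨s₂, y₂⟩ h2 hgeq
    have hy : y₁ = y₂ := congrArg Prod.snd hgeq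
    subst hy
    have hfeq : f (s₁, y₁) = f (s₂, y₁) := congrArg Prod.fst hgeq
    have hmid : ∀ {a b : ℝ}, ((a, y₁) : ℝ × (Fin m → ℝ)) ∈ W →
        ((b, y₁) : ℝ × (Fin m → ℝ)) ∈ W → ∀ t ∈ Ioo a b,
        fderiv ℝ f (t, y₁) (1, 0) ≠ 0 := by
      intro a b ha hb t ht
      rcases le_or_gt 0 t with h0 | h0
      · exact hWseg (b, y₁) hb t (by rw [Set.mem_uIcc]; left; exact ⟨h0, ht.2.le⟩)
      · exact hWseg (a, y₁) ha t (by rw [Set.mem_uIcc]; right; exact ⟨ht.1.le, h0.le⟩)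
    rcases lt_trichotomy s₁ s₂ with hlt | heq | hgt
    · exact absurd hfeq (fun hh => stmt14_mvt hf hlt (hmid h1 h2) hh)
    · rw [heq]
    · exact absurd hfeq.symm (fun hh => stmt14_mvt hf hgt (hmid h2 h1) hh)
  have hgsm : ContDiff ℝ (⊤ : ℕ∞) g := hf.prodMk contDiff_snd
  have main : ∀ q ∈ W, ∃ T : Set (ℝ × (Fin m → ℝ)), IsOpen T ∧ g q ∈ T ∧ T ⊆ g '' W ∧
      ContDiffAt ℝ (⊤ : ℕ∞) (Function.invFunOn g W) (g q) := by
    intro q hq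
    have hqA : fderiv ℝ f q (1, 0) ≠ 0 := hWA q hq
    have hgc : ContDiffAt ℝ (⊤ : ℕ∞) g q := hgsm.contDiffAt
    have hd : HasFDerivAt g ((stmt14_dEquiv (fderiv ℝ f q) hqA :
        ℝ × (Fin m → ℝ) →L[ℝ] ℝ × (Fin m → ℝ))) q := by
      rw [stmt14_dEquiv_coe]
      exact ((hf.differentiable (by simp) q).hasFDerivAt).prodMk hasFDerivAt_snd
    set Φ := hgc.toOpenPartialHomeomorph g hd (by simp) with hΦdef
    have hsrc : q ∈ Φ.source := hgc.mem_toOpenPartialHomeomorph_source hd (by simp)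
    have hcoe : ∀ x, Φ x = g x := fun x => rfl
    set T := Φ.target ∩ Φ.symm ⁻¹' (Φ.source ∩ W) with hTdef
    have hTopen : IsOpen T := Φ.isOpen_inter_preimage_symm (Φ.open_source.inter hWopen)
    have hmemT : g q ∈ T := by
      constructor
      · have := Φ.map_source hsrc; rwa [hcoe] at this
      · have h1 : Φ.symm (g q) = q := by
          have := Φ.left_inv hsrc; rwa [hcoe] at this
        simp only [Set.mem_preimage, h1]
        exact ⟨hsrc, hq⟩
    have hTsub : T ⊆ g '' W := by
      intro x hx
      have h2 : g (Φ.symm x) = x := by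
        have := Φ.right_inv hx.1; rwa [hcoe] at this
      exact ⟨Φ.symm x, hx.2.2, h2⟩
    have hagree : ∀ x ∈ T, Function.invFunOn g W x = Φ.symm x := by
      intro x hx
      have hex : ∃ a ∈ W, g a = x := by
        obtain ⟨a, ha, hh⟩ := hTsub hx; exact ⟨a, ha, hh⟩
      have h1 : Function.invFunOn g W x ∈ W := Function.invFunOn_mem hex
      have h2 : g (Function.invFunOn g W x) = x := Function.invFunOn_eq hex
      have h3 : g (Φ.symm x) = x := by
        have := Φ.right_inv hx.1; rwa [hcoe] at this
      exact hginj h1 hx.2.2 (h2.trans h3.symm)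
    have hsymm : ContDiffAt ℝ (⊤ : ℕ∞) Φ.symm (g q) := hgc.to_localInverse hd (by simp)
    exact ⟨T, hTopen, hmemT, hTsub, hsymm.congr_of_eventuallyEq
      (Filter.eventuallyEq_of_mem (hTopen.mem_nhds hmemT) hagree)⟩
  have hUopen : IsOpen (g '' W) := by
    rw [isOpen_iff_mem_nhds]
    rintro p ⟨q, hq, rfl⟩
    obtain ⟨T, hTo, hTm, hTs, _⟩ := main q hq
    exact Filter.mem_of_superset (hTo.mem_nhds hTm) hTs
  have hφ : ContDiffOn ℝ (⊤ : ℕ∞) (Function.invFunOn g W) (g '' W) := by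
    rintro p ⟨q, hq, rfl⟩
    exact ((main q hq).choose_spec.2.2.2).contDiffWithinAt
  have hleft : ∀ q ∈ W, Function.invFunOn g W (g q) = q := fun q hq =>
    hginj.leftInvOn_invFunOn hq
  have hval : ∀ p ∈ g '' W, g (Function.invFunOn g W p) = p := by
    rintro p ⟨q, hq, rfl⟩; rw [hleft q hq]
  have hmem : ∀ p ∈ g '' W, Function.invFunOn g W p ∈ W := by
    rintro p ⟨q, hq, rfl⟩; rw [hleft q hq]; exact hq
  have hg0 : ∀ y' : Fin m → ℝ, g ((0:ℝ), y') = ((0:ℝ), y') := by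
    intro y'
    show (f ((0:ℝ), y'), y') = ((0:ℝ), y')
    rw [hf0 y']
  have hpair : ∀ p ∈ g '' W,
      (((Function.invFunOn g W p).1, p.2) : ℝ × (Fin m → ℝ)) = Function.invFunOn g W p := by
    intro p hp
    have h2 : (Function.invFunOn g W p).2 = p.2 := (Prod.ext_iff.1 (hval p hp)).2
    rw [← h2]
  have himg : (fun p => (((Function.invFunOn g W p).1, p.2) : ℝ × (Fin m → ℝ))) '' (g '' W)
      = W := by
    ext x
    constructor
    · rintro ⟨p, hp, rfl⟩
      show (((Function.invFunOn g W p).1, p.2) : ℝ × (Fin m → ℝ)) ∈ W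
      rw [hpair p hp]
      exact hmem p hp
    · intro hx
      refine ⟨g x, ⟨x, hx, rfl⟩, ?_⟩
      show (((Function.invFunOn g W (g x)).1, (g x).2) : ℝ × (Fin m → ℝ)) = x
      rw [hpair _ ⟨x, hx, rfl⟩, hleft x hx]
  refine ⟨g '' W, hUopen, fun y' => ⟨((0:ℝ), y'), hW0 y', hg0 y'⟩,
    fun p => (Function.invFunOn g W p).1, ?_, ?_, ?_, ?_, g, ?_, ?_⟩
  · exact hφ.congr hpair
  · intro y'
    have h1 := hleft ((0:ℝ), y') (hW0 y')
    rw [hg0 y'] at h1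
    show (Function.invFunOn g W ((0:ℝ), y')).1 = 0
    rw [h1]
  · intro p hp
    have h4 : f (((Function.invFunOn g W p).1, p.2) : ℝ × (Fin m → ℝ)) =
        f (Function.invFunOn g W p) := by rw [hpair p hp]
    rw [h4]
    exact congrArg Prod.fst (hval p hp)
  · rw [himg]; exact hWopen
  · rw [himg]; exact hgsm.contDiffOn
  · intro p hp
    have h4 : g (((Function.invFunOn g W p).1, p.2) : ℝ × (Fin m → ℝ)) =
        g (Function.invFunOn g W p) := by rw [hpair p hp]
    rw [h4]
    exact hval p hp
end

section
/- Let α be a smooth n-form on ℝⁿ (n ≥ 1) that is closed (automatic in top degree) and let g_s(y) = e^{-s} y be the inverse Euler flow. Suppose α = f·μ where f is a homogeneous quadratic polynomial and μ a smooth n-form. Then the integral β := -∫₀^∞ ι_{(g_s)^* E}(e^{-2s} g_s^* μ) ds converges to a smooth (n-1)-form on a neighbourhood of 0, β vanishes at 0, and α = -d(f β). -/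
set_option maxHeartbeats 1000000
set_option synthInstance.maxHeartbeats 200000


open Matrix MeasureTheory

open scoped NNReal ENNReal

noncomputable def hFun (n : ℕ) (m : (Fin n → ℝ) → ℝ) (y : Fin n → ℝ) : ℝ :=
  ∫ t in Set.Ioo (0:ℝ) 1, t ^ (n+1) * m (t • y)

lemma lem_int {n : ℕ} (m : (Fin n → ℝ) → ℝ) (hm : Continuous m) (y : Fin n → ℝ) :
    IntegrableOn
      (fun s => Real.exp (-((n : ℝ) + 2) * s) * m (Real.exp (-s) • y)) (Set.Ioi 0) := by
  obtain ⟨C, hC⟩ := (isCompact_closedBall (0 : Fin n → ℝ) ‖y‖).exists_bound_of_continuousOn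
    hm.continuousOn
  have hexp : IntegrableOn (fun s : ℝ => C * Real.exp (-((n:ℝ)+2) * s)) (Set.Ioi 0) :=
    (exp_neg_integrableOn_Ioi 0 (by positivity)).const_mul C
  apply hexp.mono'
  · exact (Continuous.mul (by continuity) (hm.comp (by continuity))).aestronglyMeasurable
  · filter_upwards [ae_restrict_mem measurableSet_Ioi] with s hs
    have h1 : Real.exp (-s) ≤ 1 := Real.exp_le_one_iff.mpr (by simp [le_of_lt (Set.mem_Ioi.mp hs)])
    have hmem : Real.exp (-s) • y ∈ Metric.closedBall (0 : Fin n → ℝ) ‖y‖ := by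
      simp only [Metric.mem_closedBall, dist_zero_right, norm_smul, Real.norm_eq_abs,
        abs_of_pos (Real.exp_pos _)]
      nlinarith [Real.exp_pos (-s), norm_nonneg y]
    have := hC _ hmem
    rw [norm_mul]
    have he : ‖Real.exp (-((n:ℝ)+2) * s)‖ = Real.exp (-((n:ℝ)+2) * s) := by
      rw [Real.norm_eq_abs, abs_of_pos (Real.exp_pos _)]
    rw [he, mul_comm C]
    exact mul_le_mul_of_nonneg_left this (le_of_lt (Real.exp_pos _))

lemma image_exp_neg : (fun s : ℝ => Real.exp (-s)) '' Set.Ioi 0 = Set.Ioo 0 1 := by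
  ext t
  constructor
  · rintro ⟨s, hs, rfl⟩
    exact ⟨Real.exp_pos _, Real.exp_lt_one_iff.mpr (by simpa using hs)⟩
  · rintro ⟨h0, h1⟩
    exact ⟨-Real.log t, by simpa using Real.log_neg h0 h1, by simp [Real.exp_log h0]⟩

lemma lem_cov {n : ℕ} (m : (Fin n → ℝ) → ℝ) (y : Fin n → ℝ) :
    (∫ s in Set.Ioi (0:ℝ), Real.exp (-((n : ℝ) + 2) * s) * m (Real.exp (-s) • y))
      = hFun n m y := by
  have hderiv : ∀ s ∈ Set.Ioi (0:ℝ),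
      HasDerivWithinAt (fun s : ℝ => Real.exp (-s)) (-Real.exp (-s)) (Set.Ioi 0) s := by
    intro s _
    simpa [Function.comp_def] using ((Real.hasDerivAt_exp (-s)).comp s ((hasDerivAt_id s).neg)).hasDerivWithinAt
  have hinj : Set.InjOn (fun s : ℝ => Real.exp (-s)) (Set.Ioi 0) :=
    fun a _ b _ hab => by
      have := Real.exp_injective hab; linarith [neg_injective this]
  have := integral_image_eq_integral_abs_deriv_smul measurableSet_Ioi hderiv hinj
    (fun t => t ^ (n+1) * m (t • y))
  rw [image_exp_neg] at this
  unfold hFun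
  rw [this]
  apply setIntegral_congr_fun measurableSet_Ioi
  intro s _
  have : |(-Real.exp (-s))| = Real.exp (-s) := by
    rw [abs_neg, abs_of_pos (Real.exp_pos _)]
  beta_reduce
  rw [this, smul_eq_mul, ← mul_assoc]
  rw [show Real.exp (-s) ^ (n+1) = Real.exp (((n:ℝ)+1) * (-s)) by
    rw [← Real.exp_nat_mul]; push_cast; ring_nf]
  rw [← Real.exp_add]
  ring_nf

lemma cont_integrableOn_Ioo {F : Type*} [NormedAddCommGroup F] {g : ℝ → F}
    (hg : Continuous g) : IntegrableOn g (Set.Ioo (0:ℝ) 1) :=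
  (hg.integrableOn_Icc (a := 0) (b := 1)).mono_set Set.Ioo_subset_Icc_self

lemma point_deriv {n : ℕ} {F : Type*} [NormedAddCommGroup F] [NormedSpace ℝ F]
    (M : (Fin n → ℝ) → F) (hM : Differentiable ℝ M) (p : ℕ) (t : ℝ) (x : Fin n → ℝ) :
    HasFDerivAt (fun x => t ^ p • M (t • x)) (t ^ (p+1) • fderiv ℝ M (t • x)) x := by
  have h1 : HasFDerivAt (fun x : Fin n → ℝ => t • x)
      (t • ContinuousLinearMap.id ℝ (Fin n → ℝ)) x := by
    exact (hasFDerivAt_id x).const_smul t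
  have h2 := ((hM (t • x)).hasFDerivAt.comp x h1).const_smul (t ^ p)
  refine h2.congr_fderiv ?_
  ext v
  simp [pow_succ, smul_smul, mul_comm]

lemma aux_hasFDerivAt {n : ℕ} {F : Type*} [NormedAddCommGroup F] [NormedSpace ℝ F]
    [CompleteSpace F] (M : (Fin n → ℝ) → F) (hM : ContDiff ℝ 1 M) (p : ℕ) (y : Fin n → ℝ) :
    HasFDerivAt (fun x => ∫ t in Set.Ioo (0:ℝ) 1, t ^ p • M (t • x))
      (∫ t in Set.Ioo (0:ℝ) 1, t ^ (p+1) • fderiv ℝ M (t • y)) y := by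
  have hMd : Differentiable ℝ M := hM.differentiable one_ne_zero
  have hMc : Continuous M := hM.continuous
  have hM' : Continuous (fderiv ℝ M) := hM.continuous_fderiv one_ne_zero
  obtain ⟨C, hC⟩ := (isCompact_closedBall (0 : Fin n → ℝ) (‖y‖ + 1)).exists_bound_of_continuousOn
    hM'.continuousOn
  apply hasFDerivAt_integral_of_dominated_of_fderiv_le (s := Metric.ball y 1)
    (bound := fun _ => C) (F' := fun x t => t ^ (p+1) • fderiv ℝ M (t • x)) (Metric.ball_mem_nhds y one_pos)
  · filter_upwards with x
    exact ((continuous_pow p).smul (hMc.comp (continuous_id.smul continuous_const))).aestronglyMeasurable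
  · exact cont_integrableOn_Ioo
      ((continuous_pow p).smul (hMc.comp (continuous_id.smul continuous_const)))
  · exact ((continuous_pow (p+1)).smul (hM'.comp (continuous_id.smul continuous_const))).aestronglyMeasurable
  · filter_upwards [ae_restrict_mem measurableSet_Ioo] with t ht x hx
    have htn : ‖t ^ (p+1)‖ ≤ 1 := by
      rw [Real.norm_eq_abs, abs_pow]
      exact pow_le_one₀ (abs_nonneg t) (abs_le.mpr ⟨by linarith [ht.1], le_of_lt ht.2⟩)
    have hmem : t • x ∈ Metric.closedBall (0 : Fin n → ℝ) (‖y‖ + 1) := by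
      simp only [Metric.mem_closedBall, dist_zero_right, norm_smul, Real.norm_eq_abs]
      have hx' : ‖x‖ ≤ ‖y‖ + 1 := by
        have := mem_ball_iff_norm.mp hx
        calc ‖x‖ ≤ ‖x - y‖ + ‖y‖ := by simpa using norm_add_le (x - y) y
        _ ≤ ‖y‖ + 1 := by linarith
      have h01 : |t| ≤ 1 := abs_le.mpr ⟨by linarith [ht.1], le_of_lt ht.2⟩
      calc |t| * ‖x‖ ≤ 1 * (‖y‖ + 1) :=
        mul_le_mul h01 hx' (norm_nonneg x) zero_le_one
      _ = ‖y‖ + 1 := one_mul _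
    calc ‖t ^ (p+1) • fderiv ℝ M (t • x)‖ = ‖t ^ (p+1)‖ * ‖fderiv ℝ M (t • x)‖ := norm_smul (t ^ (p+1)) (fderiv ℝ M (t • x))
      _ ≤ 1 * C := mul_le_mul htn (hC _ hmem) (norm_nonneg _) zero_le_one
      _ = C := one_mul C
  · exact (integrableOn_const (by simp [Real.volume_Ioo]))
  · filter_upwards with t x _
    exact point_deriv M hMd p t x

lemma lem_euler {n : ℕ} (m : (Fin n → ℝ) → ℝ) (hm : ContDiff ℝ 1 m) (y : Fin n → ℝ) :
    ∫ t in Set.Ioo (0:ℝ) 1, t ^ (n+2) * (fderiv ℝ m (t • y) y)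
      = m y - ((n:ℝ)+2) * ∫ t in Set.Ioo (0:ℝ) 1, t ^ (n+1) * m (t • y) := by
  have hmc : Continuous m := hm.continuous
  have hm' : Continuous (fderiv ℝ m) := hm.continuous_fderiv one_ne_zero
  set φ' : ℝ → ℝ := fun t => ((n:ℝ)+2) * (t^(n+1) * m (t • y)) + t^(n+2) * (fderiv ℝ m (t • y) y)
    with hφ'
  have hcont1 : Continuous (fun t : ℝ => t ^ (n+1) * m (t • y)) :=
    (continuous_pow _).mul (hmc.comp (continuous_id.smul continuous_const))
  have hcont2 : Continuous (fun t : ℝ => t ^ (n+2) * (fderiv ℝ m (t • y) y)) := by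
    apply (continuous_pow _).mul
    exact ((hm'.comp (continuous_id.smul continuous_const)).clm_apply continuous_const)
  have hd : ∀ t : ℝ, HasDerivAt (fun t => t^(n+2) * m (t • y)) (φ' t) t := by
    intro t
    have h1 : HasDerivAt (fun t : ℝ => m (t • y)) (fderiv ℝ m (t • y) y) t := by
      have hs : HasDerivAt (fun t : ℝ => t • y) y t := by
        simpa using (hasDerivAt_id t).smul_const y
      simpa [Function.comp_def] using (hm.differentiable one_ne_zero (t • y)).hasFDerivAt.comp_hasDerivAt t hs
    have := (hasDerivAt_pow (n+2) t).mul h1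
    refine this.congr_deriv ?_
    rw [hφ']
    push_cast
    ring
  have hφc : Continuous φ' := by rw [hφ']; exact (continuous_const.mul hcont1).add hcont2
  have hftc : ∫ t in (0:ℝ)..1, φ' t = m y := by
    rw [intervalIntegral.integral_eq_sub_of_hasDerivAt
      (fun t _ => hd t) (hφc.intervalIntegrable 0 1)]
    simp
  have hsplit : ∫ t in (0:ℝ)..1, φ' t
      = ((n:ℝ)+2) * (∫ t in Set.Ioo (0:ℝ) 1, t^(n+1) * m (t • y))
        + ∫ t in Set.Ioo (0:ℝ) 1, t^(n+2) * (fderiv ℝ m (t • y) y) := by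
    rw [intervalIntegral.integral_of_le zero_le_one]
    simp only [← integral_Ioc_eq_integral_Ioo]
    rw [hφ']
    rw [integral_add (((hcont1.integrableOn_Icc (a:=0) (b:=1)).mono_set
        Set.Ioc_subset_Icc_self).const_mul _)
      ((hcont2.integrableOn_Icc (a:=0) (b:=1)).mono_set Set.Ioc_subset_Icc_self)]
    rw [← integral_const_mul]
  linarith [hftc, hsplit]

lemma smooth_G {n : ℕ} (k : ℕ) : ∀ {F : Type} [NormedAddCommGroup F] [NormedSpace ℝ F]
    [CompleteSpace F] (M : (Fin n → ℝ) → F), ContDiff ℝ ((⊤ : ℕ∞) : WithTop ℕ∞) M → ∀ p : ℕ,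
    ContDiff ℝ k (fun x => ∫ t in Set.Ioo (0:ℝ) 1, t ^ p • M (t • x)) := by
  induction k with
  | zero =>
    intro F _ _ _ M hM p
    rw [Nat.cast_zero, contDiff_zero]
    exact Differentiable.continuous
      (fun x => (aux_hasFDerivAt M (hM.of_le (by simp)) p x).differentiableAt)
  | succ k ih =>
    intro F _ _ _ M hM p
    have hd := aux_hasFDerivAt M (hM.of_le (by simp)) p
    have hfd : fderiv ℝ (fun x => ∫ t in Set.Ioo (0:ℝ) 1, t ^ p • M (t • x))
        = fun x => ∫ t in Set.Ioo (0:ℝ) 1, t ^ (p+1) • fderiv ℝ M (t • x) :=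
      funext fun x => (hd x).fderiv
    rw [show ((k + 1 : ℕ) : WithTop ℕ∞) = (k : WithTop ℕ∞) + 1 by push_cast; rfl,
      contDiff_succ_iff_fderiv]
    refine ⟨fun x => (hd x).differentiableAt, by simp, ?_⟩
    rw [hfd]
    exact ih (fderiv ℝ M) (hM.fderiv_right (m := ((⊤ : ℕ∞) : WithTop ℕ∞))
      (by rw [← WithTop.coe_one, ← WithTop.coe_add, top_add])) (p+1)

lemma lem_analytic {n : ℕ} (m : (Fin n → ℝ) → ℝ) (hm : ContDiff ℝ (⊤ : ℕ∞) m) :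
    ∃ r : ℝ, 0 < r ∧ ContDiffOn ℝ (⊤ : ℕ∞) (hFun n m) (Metric.ball 0 r) := by
  refine ⟨1, one_pos, ContDiff.contDiffOn ?_⟩
  refine contDiff_infty.mpr fun k => ?_
  have := smooth_G k m hm (n+1)
  unfold hFun
  simpa [smul_eq_mul] using this

lemma lem_f_analytic {n : ℕ} (Q : Matrix (Fin n) (Fin n) ℝ)
    (f : (Fin n → ℝ) → ℝ) (hf : ∀ y, f y = (1 / 2) * (y ⬝ᵥ Q.mulVec y)) :
    AnalyticOnNhd ℝ f Set.univ := by
  have hfe : f = fun y => (1/2) * ∑ i, y i * ∑ j, Q i j * y j := by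
    funext y
    rw [hf]
    simp [dotProduct, Matrix.mulVec, mul_comm]
  rw [hfe]
  intro y _
  apply AnalyticAt.mul analyticAt_const
  apply Finset.analyticAt_fun_sum
  intro i _
  apply AnalyticAt.mul
  · exact (ContinuousLinearMap.proj i : (Fin n → ℝ) →L[ℝ] ℝ).analyticAt y
  · apply Finset.analyticAt_fun_sum
    intro j _
    exact AnalyticAt.mul analyticAt_const
      ((ContinuousLinearMap.proj j : (Fin n → ℝ) →L[ℝ] ℝ).analyticAt y)

lemma lem_f_euler {n : ℕ} (Q : Matrix (Fin n) (Fin n) ℝ)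
    (f : (Fin n → ℝ) → ℝ) (hf : ∀ y, f y = (1 / 2) * (y ⬝ᵥ Q.mulVec y))
    (hfd : Differentiable ℝ f) (y : Fin n → ℝ) :
    fderiv ℝ f y y = 2 * f y := by
  have h1 : HasDerivAt (fun t : ℝ => f (t • y)) (fderiv ℝ f y y) 1 := by
    have hs : HasDerivAt (fun t : ℝ => t • y) y 1 := by
      simpa using (hasDerivAt_id (1:ℝ)).smul_const y
    have hF : HasFDerivAt f (fderiv ℝ f y) ((1:ℝ) • y) := by
      simpa using (hfd y).hasFDerivAt
    simpa [Function.comp_def] using hF.comp_hasDerivAt 1 hs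
  have h2 : (fun t : ℝ => f (t • y)) = fun t : ℝ => t^2 * f y := by
    funext t
    rw [hf, hf]
    rw [Matrix.mulVec_smul, dotProduct_smul, smul_dotProduct]
    simp [smul_eq_mul]
    ring
  rw [h2] at h1
  have h3 : HasDerivAt (fun t : ℝ => t^2 * f y) (2 * f y) 1 := by
    simpa using (hasDerivAt_pow 2 (1:ℝ)).mul_const (f y)
  exact h1.unique h3

/-- Construction of a primitive of a Morse-Bott top-degree form near the critical point
(on ℝⁿ, with the inverse Euler flow `g_s(y) = e^{-s} y`): if `α = f·μ` with `f` a homogeneous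
quadratic polynomial `f y = (1/2) yᵀQy` and `μ = m·dvol` a smooth `n`-form, then the
homotopy integral `β := -∫₀^∞ ι_{g_s^* E}(e^{-2s} g_s^* μ) ds` — which, since `g_s^* E = E`
and `g_s^* μ = e^{-ns} m(e^{-s}y) dvol`, corresponds to the vector field
`W y = -(∫₀^∞ e^{-(n+2)s} m(e^{-s} y) ds) • y` via `β = ι_W dvol` — converges, is smooth on a
neighbourhood of `0`, vanishes at `0`, and satisfies `α = -d(fβ)`, i.e.
`f·m = -div (f·W)`. -/
theorem stmt15 {n : ℕ} (hn : 1 ≤ n)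
    (Q : Matrix (Fin n) (Fin n) ℝ) (hQ : Q.IsSymm)
    (f : (Fin n → ℝ) → ℝ) (hf : ∀ y, f y = (1 / 2) * (y ⬝ᵥ Q.mulVec y))
    (m : (Fin n → ℝ) → ℝ) (hm : ContDiff ℝ (⊤ : ℕ∞) m)
    (W : (Fin n → ℝ) → (Fin n → ℝ))
    (hW : ∀ y, W y
      = -(∫ s in Set.Ioi (0 : ℝ), Real.exp (-((n : ℝ) + 2) * s) * m (Real.exp (-s) • y)) • y) :
    (∀ y, IntegrableOn
        (fun s => Real.exp (-((n : ℝ) + 2) * s) * m (Real.exp (-s) • y)) (Set.Ioi 0)) ∧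
    (∃ U : Set (Fin n → ℝ), IsOpen U ∧ (0 : Fin n → ℝ) ∈ U ∧
      (∀ i, ContDiffOn ℝ (⊤ : ℕ∞) (fun y => W y i) U) ∧
      W 0 = 0 ∧
      ∀ y ∈ U, f y * m y = -(∑ i, fderiv ℝ (fun z => f z * W z i) y (Pi.single i 1))) := by
  have hmc : Continuous m := hm.continuous
  have hm1 : ContDiff ℝ 1 m := hm.of_le (by simp)
  have hWeq : ∀ z, W z = -(hFun n m z) • z := by
    intro z; rw [hW z, lem_cov m z]
  obtain ⟨r, hr, hAn⟩ := lem_analytic m hm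
  have hfa := lem_f_analytic Q f hf
  have hfd : Differentiable ℝ f := fun z => (hfa z trivial).differentiableAt
  refine ⟨fun y => lem_int m hmc y, Metric.ball 0 r, Metric.isOpen_ball,
    Metric.mem_ball_self hr, ?_, by rw [hWeq 0]; simp, ?_⟩
  · intro i
    have heq : (fun y => W y i) = fun y => -(hFun n m y) * y i := by
      funext z; rw [hWeq z]; simp
    rw [heq]
    exact hAn.neg.mul (contDiff_apply ℝ ℝ i).contDiffOn
  · intro y _
    -- derivative of hFun
    have hh0 := aux_hasFDerivAt m hm1 (n+1) y
    simp only [smul_eq_mul] at hh0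
    have hh' : HasFDerivAt (hFun n m)
        (∫ t in Set.Ioo (0:ℝ) 1, t ^ (n+2) • fderiv ℝ m (t • y)) y := by
      have : hFun n m = fun x => ∫ t in Set.Ioo (0:ℝ) 1, t ^ (n+1) * m (t • x) := rfl
      rw [this]; exact hh0
    set Lh : (Fin n → ℝ) →L[ℝ] ℝ := ∫ t in Set.Ioo (0:ℝ) 1, t ^ (n+2) • fderiv ℝ m (t • y)
      with hLh
    have hintLh : Integrable (fun t : ℝ => t ^ (n+2) • fderiv ℝ m (t • y))
        (volume.restrict (Set.Ioo (0:ℝ) 1)) := by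
      apply cont_integrableOn_Ioo
      exact (continuous_pow _).smul
        ((hm1.continuous_fderiv one_ne_zero).comp (continuous_id.smul continuous_const))
    have hLhy : Lh y = m y - ((n:ℝ)+2) * hFun n m y := by
      rw [hLh, ContinuousLinearMap.integral_apply hintLh]
      simp only [ContinuousLinearMap.smul_apply, smul_eq_mul]
      exact lem_euler m hm1 y
    set D : (Fin n → ℝ) →L[ℝ] ℝ := f y • Lh + hFun n m y • fderiv ℝ f y with hD
    have hG : HasFDerivAt (fun z => f z * hFun n m z) D y := (hfd y).hasFDerivAt.mul hh'
    have hfder : ∀ i, fderiv ℝ (fun z => f z * W z i) y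
        = -((f y * hFun n m y) • (ContinuousLinearMap.proj i : (Fin n → ℝ) →L[ℝ] ℝ)
            + y i • D) := by
      intro i
      have hWi : (fun z => f z * W z i) = fun z => -((f z * hFun n m z) * z i) := by
        funext z; rw [hWeq z]; simp; ring
      rw [hWi]
      exact (hG.mul ((ContinuousLinearMap.proj i :
        (Fin n → ℝ) →L[ℝ] ℝ).hasFDerivAt)).neg.fderiv
    have hsingle : ∀ i : Fin n, (Pi.single i (y i) : Fin n → ℝ) = y i • (Pi.single i (1:ℝ) : Fin n → ℝ) := by
      intro i
      ext j
      rcases eq_or_ne j i with rfl | hne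
      · simp
      · simp [Pi.single_eq_of_ne hne]
    have hsumD : ∑ i, y i * D (Pi.single i 1) = D y := by
      calc ∑ i, y i * D (Pi.single i 1) = ∑ i, D (Pi.single i (y i)) := by
            refine Finset.sum_congr rfl fun i _ => ?_
            rw [hsingle i, _root_.map_smul, smul_eq_mul]
        _ = D (∑ i, Pi.single i (y i)) := (map_sum D _ _).symm
        _ = D y := by rw [Finset.univ_sum_single]
      -- done
    have hsum : -(∑ i, fderiv ℝ (fun z => f z * W z i) y (Pi.single i 1))
        = (n:ℝ) * (f y * hFun n m y) + D y := by
      have hptw : ∀ i : Fin n, fderiv ℝ (fun z => f z * W z i) y (Pi.single i 1)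
          = -((f y * hFun n m y) + y i * D (Pi.single i 1)) := by
        intro i
        rw [hfder i]
        simp [ContinuousLinearMap.proj_apply, Pi.single_eq_same]
      rw [Finset.sum_congr rfl (fun i _ => hptw i)]
      rw [← Finset.sum_neg_distrib]
      simp only [neg_neg]
      rw [Finset.sum_add_distrib, Finset.sum_const, hsumD, Finset.card_univ,
        Fintype.card_fin, nsmul_eq_mul]
    have hDy : D y = f y * (m y - ((n:ℝ)+2) * hFun n m y) + hFun n m y * (2 * f y) := by
      rw [hD]
      simp only [ContinuousLinearMap.add_apply, ContinuousLinearMap.smul_apply, smul_eq_mul]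
      rw [hLhy, lem_f_euler Q f hf hfd y]
    rw [hsum, hDy]
    ring
end
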